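/- Let n ≥ 3 be an integer. The function a ↦ S(a) = cosh(a) · ∫_1^∞ (t^{2n−2} − 1)^{−1/2} · (cosh²(a)·t² − 1)^{−1/2} dt is strictly decreasing on (0, ∞); equivalently, since d = cosh^{n−1}(a) is a strictly increasing function of a > 0, the height 2·S of the family of translation-invariant minimal hypersurfaces M_d is a strictly decreasing function of the parameter d > 1. -/

import Mathlib

/-- `S n a = cosh(a) · ∫_1^∞ (t^{2n−2} − 1)^{-1/2} (cosh²(a)·t² − 1)^{-1/2} dt`. -/
noncomputable def S (n : ℕ) (a : ℝ) : ℝ :=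
  Real.cosh a *
    ∫ t in Set.Ioi (1 : ℝ),
      (t ^ (2 * n - 2) - 1) ^ (-(1 : ℝ) / 2) *
        (Real.cosh a ^ 2 * t ^ 2 - 1) ^ (-(1 : ℝ) / 2)

/-!
With `ε = 1 / cosh² a` one has `cosh a · (cosh² a · t² − 1)^{-1/2} = (t² − ε)^{-1/2}`, so
`S(a) = ∫_1^∞ ((t^{2n−2} − 1)(t² − ε))^{-1/2} dt`. The integrand increases strictly with `ε`,
and `ε` decreases strictly with `a`. For `ε < 1` the integrand is dominated by
`(1 − ε)^{-1/2} / (t √(t − 1))`, and `1 / (t √(t − 1))` is integrable on `(1, ∞)` as the nonnegative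
derivative of `2 arctan √(t − 1)`, which has a finite limit at `∞`. Hence the pointwise strict
inequality survives integration.
-/

open MeasureTheory Set Real Filter Topology

theorem rpow_neg_one_div_two {x : ℝ} (hx : 0 ≤ x) : x ^ (-(1 : ℝ) / 2) = (√x)⁻¹ := by
  rw [neg_div, rpow_neg hx, sqrt_eq_rpow]

theorem setIntegral_lt_setIntegral_of_forall_lt {X : Type*} [MeasurableSpace X] {μ : Measure X}
    {s : Set X} {f g : X → ℝ} (hs : MeasurableSet s) (hμs : μ s ≠ 0)
    (hf : IntegrableOn f s μ) (hg : IntegrableOn g s μ) (hlt : ∀ x ∈ s, f x < g x) :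
    ∫ x in s, f x ∂μ < ∫ x in s, g x ∂μ := by
  rw [← sub_pos, ← integral_sub hg hf, setIntegral_pos_iff_support_of_nonneg_ae
    ((ae_restrict_mem hs).mono fun x hx => (sub_pos.2 (hlt x hx)).le) (hg.sub hf)]
  refine pos_iff_ne_zero.2 (mt (measure_mono_null fun x hx => ⟨?_, hx⟩) hμs)
  exact (sub_pos.2 (hlt x hx)).ne'

theorem integrableOn_Ioi_inv_mul_sqrt_sub_one :
    IntegrableOn (fun t : ℝ => (t * √(t - 1))⁻¹) (Ioi 1) := by
  refine integrableOn_Ioi_deriv_of_nonneg (g := fun t => 2 * arctan √(t - 1)) (l := 2 * (π / 2))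
    (by fun_prop) (fun t ht => ?_)
    (fun t ht => inv_nonneg.2 (mul_nonneg (by linarith [ht.out]) (sqrt_nonneg _))) ?_
  · have ht' : t - 1 ≠ 0 := sub_ne_zero.2 (ne_of_gt ht)
    refine ((((hasDerivAt_id t).sub_const 1).sqrt ht').arctan.const_mul 2).congr_deriv ?_
    rw [id, sq_sqrt (sub_nonneg.2 (le_of_lt ht))]
    field_simp
    ring
  · exact ((tendsto_arctan_atTop.mono_right nhdsWithin_le_nhds).comp
      (tendsto_sqrt_atTop.comp (tendsto_atTop_add_const_right _ (-1) tendsto_id))).const_mul 2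

noncomputable def heightIntegrand (k : ℕ) (ε t : ℝ) : ℝ := (√((t ^ k - 1) * (t ^ 2 - ε)))⁻¹

theorem heightIntegrand_nonneg (k : ℕ) (ε t : ℝ) : 0 ≤ heightIntegrand k ε t :=
  inv_nonneg.2 (sqrt_nonneg _)

theorem heightIntegrand_le {k : ℕ} {ε t : ℝ} (hk : 1 ≤ k) (hε₀ : 0 ≤ ε) (hε₁ : ε < 1)
    (ht : 1 < t) : heightIntegrand k ε t ≤ (√(1 - ε))⁻¹ * (t * √(t - 1))⁻¹ := by
  have hpos : 0 < √(1 - ε) * (t * √(t - 1)) := by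
    have hε' := sqrt_pos.2 (sub_pos.2 hε₁)
    have ht' := sqrt_pos.2 (sub_pos.2 ht)
    positivity
  have hbound : (1 - ε) * (t ^ 2 * (t - 1)) ≤ (t ^ k - 1) * (t ^ 2 - ε) := by
    have hk' : t - 1 ≤ t ^ k - 1 := sub_le_sub_right (le_self_pow₀ ht.le (by omega)) 1
    have ht2 : (1 - ε) * t ^ 2 ≤ t ^ 2 - ε := by nlinarith [one_le_pow₀ (n := 2) ht.le]
    calc (1 - ε) * (t ^ 2 * (t - 1)) = (t - 1) * ((1 - ε) * t ^ 2) := by ring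
      _ ≤ (t ^ k - 1) * (t ^ 2 - ε) := mul_le_mul hk' ht2 (by positivity) (by linarith)
  rw [heightIntegrand, ← mul_inv]
  refine inv_anti₀ hpos ((le_sqrt hpos.le (le_trans (by positivity) hbound)).2 ?_)
  rwa [mul_pow, mul_pow, sq_sqrt (sub_pos.2 hε₁).le, sq_sqrt (sub_pos.2 ht).le]

theorem heightIntegrand_lt_heightIntegrand {k : ℕ} {ε₁ ε₂ t : ℝ} (hk : 1 ≤ k) (hε : ε₁ < ε₂)
    (hε₂ : ε₂ ≤ 1) (ht : 1 < t) : heightIntegrand k ε₁ t < heightIntegrand k ε₂ t := by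
  have hX : 0 < t ^ k - 1 := sub_pos.2 (one_lt_pow₀ ht (by omega))
  have hZ : 0 < t ^ 2 - ε₂ := by nlinarith [one_lt_pow₀ (n := 2) ht (by norm_num)]
  refine inv_strictAnti₀ (sqrt_pos.2 (by positivity)) (sqrt_lt_sqrt (by positivity) ?_)
  exact mul_lt_mul_of_pos_left (by linarith) hX

theorem integrableOn_heightIntegrand {k : ℕ} {ε : ℝ} (hk : 1 ≤ k) (hε₀ : 0 ≤ ε) (hε₁ : ε < 1) :
    IntegrableOn (heightIntegrand k ε) (Ioi 1) := by
  refine (integrableOn_Ioi_inv_mul_sqrt_sub_one.const_mul (√(1 - ε))⁻¹).mono'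
    (by unfold heightIntegrand; fun_prop) ((ae_restrict_mem measurableSet_Ioi).mono fun t ht => ?_)
  rw [Real.norm_of_nonneg (heightIntegrand_nonneg k ε t)]
  exact heightIntegrand_le hk hε₀ hε₁ ht

theorem strictMonoOn_integral_heightIntegrand {k : ℕ} (hk : 1 ≤ k) :
    StrictMonoOn (fun ε => ∫ t in Ioi 1, heightIntegrand k ε t) (Ico 0 1) :=
  fun _ hε₁ _ hε₂ hε => setIntegral_lt_setIntegral_of_forall_lt measurableSet_Ioi (by simp)
    (integrableOn_heightIntegrand hk hε₁.1 hε₁.2) (integrableOn_heightIntegrand hk hε₂.1 hε₂.2)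
    fun _ ht => heightIntegrand_lt_heightIntegrand hk hε hε₂.2.le ht

theorem S_eq_integral_heightIntegrand (n : ℕ) (a : ℝ) :
    S n a = ∫ t in Ioi 1, heightIntegrand (2 * n - 2) (cosh a ^ 2)⁻¹ t := by
  rw [S, ← integral_const_mul]
  refine setIntegral_congr_fun measurableSet_Ioi fun t (ht : 1 < t) => ?_
  have hc : 1 ≤ cosh a := one_le_cosh a
  have hX : 0 ≤ t ^ (2 * n - 2) - 1 := sub_nonneg.2 (one_le_pow₀ ht.le)
  have hY : cosh a ^ 2 * t ^ 2 - 1 = cosh a ^ 2 * (t ^ 2 - (cosh a ^ 2)⁻¹) := by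
    field_simp
  have hY₀ : 0 ≤ cosh a ^ 2 * t ^ 2 - 1 := by
    nlinarith [one_le_pow₀ (n := 2) hc, one_le_pow₀ (n := 2) ht.le]
  rw [rpow_neg_one_div_two hX, rpow_neg_one_div_two hY₀, hY, heightIntegrand, sqrt_mul hX,
    sqrt_mul (sq_nonneg _), sqrt_sq (cosh_pos a).le, mul_inv, mul_inv]
  field_simp [(cosh_pos a).ne']

/-- For `n ≥ 3`, the height `2·S(a)` of the translation-invariant minimal
hypersurface is strictly decreasing in `a` on `(0, ∞)`; since
`d = cosh^{n−1}(a)` is strictly increasing in `a > 0`, the height is a strictly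
decreasing function of the parameter `d > 1`. -/
theorem S_strictAnti (n : ℕ) (hn : 3 ≤ n) :
    StrictAntiOn (fun a : ℝ => 2 * S n a) (Set.Ioi (0 : ℝ)) ∧
      StrictMonoOn (fun a : ℝ => Real.cosh a ^ (n - 1)) (Set.Ioi (0 : ℝ)) := by
  have hcosh : StrictMonoOn cosh (Ioi 0) := cosh_strictMonoOn.mono Ioi_subset_Ici_self
  refine ⟨fun a ha b hb hab => ?_,
    fun a ha b hb hab => pow_lt_pow_left₀ (hcosh ha hb hab) (cosh_pos a).le (by omega)⟩
  have hsech : ∀ x ∈ Ioi (0 : ℝ), (cosh x ^ 2)⁻¹ ∈ Ico 0 1 := fun x hx =>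
    ⟨by positivity, inv_lt_one_of_one_lt₀ (one_lt_pow₀ (one_lt_cosh.2 (ne_of_gt hx)) two_ne_zero)⟩
  have hlt : (cosh b ^ 2)⁻¹ < (cosh a ^ 2)⁻¹ :=
    inv_strictAnti₀ (by positivity) (pow_lt_pow_left₀ (hcosh ha hb hab) (cosh_pos a).le two_ne_zero)
  have hint := strictMonoOn_integral_heightIntegrand (k := 2 * n - 2) (by omega)
    (hsech b hb) (hsech a ha) hlt
  simp only [S_eq_integral_heightIntegrand] at hint ⊢
  linarith
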